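/- For strictly positive p on [m], the map W with W_i(p) = ∑_{j≠i} p_i/(p_i + p_j) is injective on the open probability simplex: if p, q are strictly positive probability distributions on [m] with W(p) = W(q), then p = q. -/

import Mathlib

/-!
Put `S = {i | q i < p i}`. Summing `W_i` over `i ∈ S`, every pair inside `S` contributes
`p_i/(p_i+p_j) + p_j/(p_j+p_i) = 1` whatever the weights, so `W(p) = W(q)` forces the cross terms
`∑_{i ∈ S, j ∉ S} r_i/(r_i+r_j)` to agree for `r = p` and `r = q`. But each such term is strictly
larger for `p` than for `q`, so `S` is empty or everything; the latter contradicts `∑ p = ∑ q`,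
and the former gives `p ≤ q` with equal sums, hence `p = q`.
-/

open Finset

lemma div_add_add_div_add_swap {a b : ℝ} (h : a + b ≠ 0) : a / (a + b) + b / (b + a) = 1 := by
  rw [add_comm b a, ← add_div, div_self h]

lemma two_mul_sum_sum_erase_of_add_swap {α : Type*} [DecidableEq α] (S : Finset α)
    (f : α → α → ℝ) (hf : ∀ i ∈ S, ∀ j ∈ S, i ≠ j → f i j + f j i = 1) :
    2 * ∑ i ∈ S, ∑ j ∈ S.erase i, f i j = ∑ i ∈ S, (#(S.erase i) : ℝ) := by
  have hswap : ∑ i ∈ S, ∑ j ∈ S.erase i, f j i = ∑ i ∈ S, ∑ j ∈ S.erase i, f i j :=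
    sum_comm' fun i j => by simp only [mem_erase]; tauto
  calc 2 * ∑ i ∈ S, ∑ j ∈ S.erase i, f i j
      = ∑ i ∈ S, ∑ j ∈ S.erase i, (f i j + f j i) := by
        simp only [sum_add_distrib, hswap]; ring
    _ = ∑ i ∈ S, ∑ j ∈ S.erase i, (1 : ℝ) :=
        sum_congr rfl fun i hi => sum_congr rfl fun j hj =>
          hf i hi j (mem_of_mem_erase hj) (ne_of_mem_erase hj).symm
    _ = ∑ i ∈ S, (#(S.erase i) : ℝ) := by simp

lemma sum_erase_univ_eq_sum_erase_add_sum_compl {ι : Type*} [Fintype ι] [DecidableEq ι]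
    {S : Finset ι} {i : ι} (hi : i ∈ S) (g : ι → ℝ) :
    ∑ j ∈ univ.erase i, g j = ∑ j ∈ S.erase i, g j + ∑ j ∈ Sᶜ, g j := by
  rw [sum_erase_eq_sub (mem_univ i), sum_erase_eq_sub hi, ← sum_add_sum_compl S]
  ring

lemma div_add_lt_div_add {p₁ p₂ q₁ q₂ : ℝ} (hp₁ : 0 < p₁) (hp₂ : 0 < p₂) (hq₁ : 0 < q₁)
    (hq₂ : 0 < q₂) (h₁ : q₁ < p₁) (h₂ : p₂ ≤ q₂) :
    q₁ / (q₁ + q₂) < p₁ / (p₁ + p₂) := by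
  rw [div_lt_div_iff₀ (by positivity) (by positivity)]
  nlinarith [mul_lt_mul_of_pos_right h₁ hp₂, mul_le_mul_of_nonneg_left h₂ hp₁.le]

lemma two_mul_sum_sum_erase_div_add {α : Type*} [DecidableEq α] {r : α → ℝ}
    (hr : ∀ i, 0 < r i) (S : Finset α) :
    2 * ∑ i ∈ S, ∑ j ∈ S.erase i, r i / (r i + r j) = ∑ i ∈ S, (#(S.erase i) : ℝ) :=
  two_mul_sum_sum_erase_of_add_swap S _ fun i _ j _ _ =>
    div_add_add_div_add_swap (add_pos (hr i) (hr j)).ne'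

section ExpectedWins

variable {ι : Type*} [Fintype ι] [DecidableEq ι]

/-- The paper's `W_i(r)`: the expected number of wins of `i` in a Bradley–Terry round robin
with strengths `r`. -/
noncomputable def expectedWins (r : ι → ℝ) (i : ι) : ℝ :=
  ∑ j ∈ univ.erase i, r i / (r i + r j)

lemma sum_expectedWins_eq (S : Finset ι) (r : ι → ℝ) :
    ∑ i ∈ S, expectedWins r i
      = ∑ i ∈ S, ∑ j ∈ S.erase i, r i / (r i + r j) + ∑ i ∈ S, ∑ j ∈ Sᶜ, r i / (r i + r j) := by
  rw [← sum_add_distrib]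
  exact sum_congr rfl fun i hi => sum_erase_univ_eq_sum_erase_add_sum_compl hi _

lemma lt_of_expectedWins_eq {p q : ι → ℝ} (hp : ∀ i, 0 < p i) (hq : ∀ i, 0 < q i)
    (hW : expectedWins p = expectedWins q) {i j : ι} (hi : q i < p i) : q j < p j := by
  by_contra! hj
  set S := univ.filter fun k => q k < p k
  have hiS : i ∈ S := by simpa [S] using hi
  have hjS : j ∈ Sᶜ := by simpa [S] using hj
  have hsum := sum_expectedWins_eq S p
  rw [hW, sum_expectedWins_eq S q] at hsum
  have hinner_p := two_mul_sum_sum_erase_div_add hp S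
  have hinner_q := two_mul_sum_sum_erase_div_add hq S
  have hcross : ∑ k ∈ S, ∑ l ∈ Sᶜ, q k / (q k + q l) < ∑ k ∈ S, ∑ l ∈ Sᶜ, p k / (p k + p l) :=
    sum_lt_sum_of_nonempty ⟨i, hiS⟩ fun k hk => sum_lt_sum_of_nonempty ⟨j, hjS⟩ fun l hl =>
      div_add_lt_div_add (hp k) (hp l) (hq k) (hq l) (by simpa [S] using hk)
        (by simpa [S] using hl)
  linarith

theorem eq_of_expectedWins_eq {p q : ι → ℝ} (hp : ∀ i, 0 < p i)
    (hq : ∀ i, 0 < q i) (hsum : ∑ i, p i = ∑ i, q i) (hW : expectedWins p = expectedWins q) :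
    p = q := by
  have hle : ∀ i, p i ≤ q i := by
    intro i
    by_contra! hi
    have : ∑ j, q j < ∑ j, p j :=
      sum_lt_sum_of_nonempty ⟨i, mem_univ i⟩ fun j _ => lt_of_expectedWins_eq hp hq hW hi
    linarith
  funext i
  exact (sum_eq_sum_iff_of_le fun j _ => hle j).1 hsum i (mem_univ i)

end ExpectedWins

/-- The map `W_i(p) = ∑_{j≠i} p_i/(p_i+p_j)` is injective on the open probability
simplex. -/
theorem stmt_19 (m : ℕ) (p q : Fin m → ℝ)
    (hp : ∀ i, 0 < p i) (hq : ∀ i, 0 < q i)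
    (hps : ∑ i, p i = 1) (hqs : ∑ i, q i = 1)
    (hW : ∀ i, ∑ j ∈ Finset.univ \ {i}, p i / (p i + p j)
            = ∑ j ∈ Finset.univ \ {i}, q i / (q i + q j)) :
    p = q := by
  refine eq_of_expectedWins_eq hp hq (hps.trans hqs.symm) (funext fun i => ?_)
  simpa only [expectedWins, sdiff_singleton_eq_erase] using hW i
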